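/- arXiv:2601.20781 — 2 statements merged into one kernel-verified Lean document; each statement's English description precedes it below -/
import Mathlib

section
/- Let K be an n×n real symmetric positive semidefinite matrix, η > 0, 1 ≤ k < n, and f ≥ 1. Let V_k ∈ ℝ^{n×k} have as columns orthonormal eigenvectors of K associated with the k largest eigenvalues λ_1(K), …, λ_k(K). If S ∈ ℝ^{n×k} is a selection operator such that V_k^T S is invertible and ‖(V_k^T S)^{-1}‖_2^2 ≤ 1 + f^2 k(n−k) (the guarantee provided by strong rank-revealing QR applied to V_k^T), then logdet(I_k + η^{-2} S^T K S) ≥ Σ_{i=1}^k log(1 + η^{-2} λ_i(K) / (1 + f^2 k(n−k))). -/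
/-!
Write `W = Vₖᵀ S`, `Λ = diag(λ₁(K), …, λₖ(K))`, `r = η⁻²` and `c = 1 + f²k(n−k)`. Because the
columns of `Vₖ` span an invariant subspace, `K − Vₖ Λ Vₖᵀ = (I − VₖVₖᵀ) K (I − VₖVₖᵀ)` is positive
semidefinite, so `Sᵀ K S ⪰ Wᵀ Λ W`, and the determinant is monotone on positive definite
matrices. By Sylvester's identity `det(I + r WᵀΛW) = det(I + r Λ^{1/2} W Wᵀ Λ^{1/2})`, and
`W Wᵀ ⪰ ‖W⁻¹‖₂⁻² I ⪰ c⁻¹ I`, so this is at least `det(I + (r/c) Λ) = ∏ (1 + r λᵢ / c)`.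
-/

open Matrix BigOperators

/-- The eigenvalues of a Hermitian (real symmetric) matrix, listed in
non-increasing order: `eigsDesc hA i` is the `(i+1)`-th largest eigenvalue. -/
noncomputable def eigsDesc {n : ℕ} {A : Matrix (Fin n) (Fin n) ℝ}
    (hA : A.IsHermitian) : Fin n → ℝ :=
  fun i => (hA.eigenvalues ∘ Tuple.sort hA.eigenvalues) i.rev

/-- The spectral norm (largest singular value) of a real matrix. -/
noncomputable def specNorm {m n : ℕ} (A : Matrix (Fin m) (Fin n) ℝ) : ℝ :=
  ‖LinearMap.toContinuousLinearMap (Matrix.toEuclideanLin A)‖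

/-- `S` is a selection operator: its columns are `k` distinct standard basis
vectors of `ℝ^n`. -/
def IsSelection {n k : ℕ} (S : Matrix (Fin n) (Fin k) ℝ) : Prop :=
  ∃ g : Fin k → Fin n, Function.Injective g ∧
    S = Matrix.of fun i j => if i = g j then (1 : ℝ) else 0

namespace Matrix

variable {m l : Type*} [Fintype m] [Fintype l] [DecidableEq m] [DecidableEq l]

theorem IsHermitian.det_one_add {M : Matrix m m ℝ} (hM : M.IsHermitian) :
    (1 + M).det = ∏ i, (1 + hM.eigenvalues i) := by
  have h : 1 + M = cfc (fun x : ℝ => 1 + x) M := by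
    rw [cfc_const_add 1 (fun x => x) M, cfc_id' ℝ M, algebraMap_eq_diagonal]
    rfl
  rw [h, hM.cfc_eq]
  simp [IsHermitian.cfc, -Unitary.conjStarAlgAut_apply]

theorem PosSemidef.one_le_det_one_add {M : Matrix m m ℝ} (hM : M.PosSemidef) :
    1 ≤ (1 + M).det := by
  rw [hM.isHermitian.det_one_add]
  exact Finset.one_le_prod fun i _ => le_add_of_nonneg_right (hM.eigenvalues_nonneg i)

open scoped MatrixOrder in
theorem PosSemidef.exists_isHermitian_mul_self {N : Matrix m m ℝ} (hN : N.PosSemidef) :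
    ∃ R : Matrix m m ℝ, R.IsHermitian ∧ R * R = N :=
  ⟨CFC.sqrt N, (CFC.sqrt_nonneg N).posSemidef.isHermitian, CFC.sqrt_mul_sqrt_self N hN.nonneg⟩

theorem PosDef.det_le_det_add {A N : Matrix m m ℝ} (hA : A.PosDef) (hN : N.PosSemidef) :
    A.det ≤ (A + N).det := by
  obtain ⟨R, hR, rfl⟩ := hN.exists_isHermitian_mul_self
  have hdetA : IsUnit A.det := (isUnit_iff_isUnit_det A).mp hA.isUnit
  -- Sylvester's identity turns `A⁻¹ R R` into the positive semidefinite `R A⁻¹ R`.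
  have hfactor : (A + R * R).det = A.det * (1 + R * (A⁻¹ * R)).det := by
    rw [← det_one_add_mul_comm, ← det_mul, mul_add, mul_one, Matrix.mul_assoc,
      mul_nonsing_inv_cancel_left _ _ hdetA]
  have hpsd : (R * (A⁻¹ * R)).PosSemidef := by
    have h := hA.posSemidef.inv.conjTranspose_mul_mul_same R
    rwa [hR.eq, Matrix.mul_assoc] at h
  rw [hfactor]
  exact le_mul_of_one_le_right hA.det_pos.le hpsd.one_le_det_one_add

theorem det_one_add_smul_le_det_one_add_transpose_mul_mul {B : Matrix m m ℝ}
    {W : Matrix m l ℝ} {t : ℝ} (hB : B.PosSemidef) (ht : 0 ≤ t)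
    (hW : (W * Wᵀ - t • 1).PosSemidef) :
    (1 + t • B).det ≤ (1 + Wᵀ * B * W).det := by
  obtain ⟨R, hR, rfl⟩ := hB.exists_isHermitian_mul_self
  have hsplit : R * (W * Wᵀ) * R = t • (R * R) + Rᴴ * (W * Wᵀ - t • 1) * R := by
    rw [hR.eq, Matrix.mul_sub, Matrix.sub_mul, Matrix.mul_smul, Matrix.smul_mul, Matrix.mul_one]
    abel
  rw [show Wᵀ * (R * R) * W = (Wᵀ * R) * (R * W) by simp only [Matrix.mul_assoc],
    det_one_add_mul_comm, show R * W * (Wᵀ * R) = R * (W * Wᵀ) * R by simp only [Matrix.mul_assoc],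
    hsplit, ← add_assoc]
  exact (PosDef.one.add_posSemidef (hB.smul ht)).det_le_det_add (hW.conjTranspose_mul_mul_same R)

theorem PosSemidef.sub_mul_diagonal_mul_transpose {n : Type*} [Fintype n] [DecidableEq n]
    {K : Matrix n n ℝ} {V : Matrix n m ℝ} {d : m → ℝ} (hK : K.PosSemidef)
    (hV : Vᵀ * V = 1) (hKV : K * V = V * diagonal d) :
    (K - V * diagonal d * Vᵀ).PosSemidef := by
  have hVK : Vᵀ * K = diagonal d * Vᵀ := by
    simpa [transpose_mul, ← conjTranspose_eq_transpose_of_trivial, hK.isHermitian.eq]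
      using congrArg (fun M : Matrix n m ℝ => Mᵀ) hKV
  set Q : Matrix n n ℝ := 1 - V * Vᵀ
  have hQ : Qᴴ = Q := by
    simp [Q, conjTranspose_eq_transpose_of_trivial, transpose_sub, transpose_mul]
  have hproj : K - V * diagonal d * Vᵀ = Qᴴ * K * Q := by
    rw [hQ]
    simp only [Q, Matrix.sub_mul, Matrix.mul_sub, Matrix.one_mul, Matrix.mul_one, Matrix.mul_assoc,
      hVK, ← Matrix.mul_assoc K, hKV]
    simp only [← Matrix.mul_assoc Vᵀ V, hV, Matrix.one_mul]
    abel
  rw [hproj]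
  exact hK.conjTranspose_mul_mul_same Q

end Matrix

section SpecNorm

variable {m n : ℕ}

theorem specNorm_transpose (A : Matrix (Fin m) (Fin n) ℝ) : specNorm Aᵀ = specNorm A := by
  rw [specNorm, specNorm, ← conjTranspose_eq_transpose_of_trivial,
    toEuclideanLin_conjTranspose_eq_adjoint, LinearMap.adjoint_toContinuousLinearMap]
  exact ContinuousLinearMap.adjoint.norm_map _

theorem dotProduct_mulVec_self_le_specNorm_sq (A : Matrix (Fin m) (Fin n) ℝ) (x : Fin n → ℝ) :
    (A *ᵥ x) ⬝ᵥ (A *ᵥ x) ≤ specNorm A ^ 2 * (x ⬝ᵥ x) := by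
  have hdot {ι : Type} [Fintype ι] (y : ι → ℝ) : y ⬝ᵥ y = ‖WithLp.toLp 2 y‖ ^ 2 := by
    rw [← real_inner_self_eq_norm_sq, EuclideanSpace.inner_eq_star_dotProduct, star_trivial]
  have h : ‖toEuclideanLin A (WithLp.toLp 2 x)‖ ≤ specNorm A * ‖WithLp.toLp 2 x‖ :=
    (LinearMap.toContinuousLinearMap (toEuclideanLin A)).le_opNorm _
  rw [hdot, hdot, ← mul_pow]
  exact pow_le_pow_left₀ (norm_nonneg _) h 2

theorem posSemidef_mul_transpose_sub_smul_one {W : Matrix (Fin m) (Fin m) ℝ} {c : ℝ}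
    (hW : IsUnit W.det) (hc : 0 < c) (h : specNorm W⁻¹ ^ 2 ≤ c) :
    (W * Wᵀ - c⁻¹ • 1).PosSemidef := by
  refine .of_dotProduct_mulVec_nonneg ?_ fun x => ?_
  · simp [IsHermitian, conjTranspose_eq_transpose_of_trivial, transpose_sub, transpose_mul]
  set y := Wᵀ *ᵥ x
  have hxy : x = (W⁻¹)ᵀ *ᵥ y := by
    rw [mulVec_mulVec, transpose_nonsing_inv, nonsing_inv_mul _ (by rwa [det_transpose]),
      one_mulVec]
  have hx : x ⬝ᵥ x ≤ c * (y ⬝ᵥ y) := calc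
    x ⬝ᵥ x ≤ specNorm W⁻¹ ^ 2 * (y ⬝ᵥ y) := by
      conv_lhs => rw [hxy]
      simpa only [specNorm_transpose] using dotProduct_mulVec_self_le_specNorm_sq (W⁻¹)ᵀ y
    _ ≤ c * (y ⬝ᵥ y) := mul_le_mul_of_nonneg_right h (dotProduct_self_star_nonneg y)
  have hquad : star x ⬝ᵥ (W * Wᵀ - c⁻¹ • 1) *ᵥ x = y ⬝ᵥ y - c⁻¹ * (x ⬝ᵥ x) := by
    rw [star_trivial, sub_mulVec, dotProduct_sub, ← mulVec_mulVec, dotProduct_mulVec,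
      ← mulVec_transpose, smul_mulVec, one_mulVec, dotProduct_smul, smul_eq_mul]
  rw [hquad, sub_nonneg, inv_mul_le_iff₀ hc]
  exact hx

end SpecNorm

theorem eigsDesc_nonneg {n : ℕ} {A : Matrix (Fin n) (Fin n) ℝ} (hA : A.PosSemidef) (i : Fin n) :
    0 ≤ eigsDesc hA.isHermitian i :=
  hA.eigenvalues_nonneg _

theorem prod_one_add_div_le_det_one_add_smul {n k : ℕ} {K : Matrix (Fin n) (Fin n) ℝ}
    {V S : Matrix (Fin n) (Fin k) ℝ} {d : Fin k → ℝ} {r c : ℝ} (hK : K.PosSemidef)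
    (hd : 0 ≤ d) (hV : Vᵀ * V = 1) (hKV : K * V = V * diagonal d)
    (hinv : IsUnit (Vᵀ * S).det) (hr : 0 ≤ r) (hc : 0 < c)
    (hnorm : specNorm (Vᵀ * S)⁻¹ ^ 2 ≤ c) :
    ∏ i, (1 + r * d i / c) ≤ (1 + r • (Sᵀ * K * S)).det := by
  set W := Vᵀ * S
  have hΛ : (r • diagonal d).PosSemidef := (PosSemidef.diagonal hd).smul hr
  have hN := hK.sub_mul_diagonal_mul_transpose hV hKV
  -- `Sᵀ K S` splits into the part seen by the leading eigenvectors and a positive remainder.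
  have hsplit : 1 + r • (Sᵀ * K * S) =
      1 + Wᵀ * (r • diagonal d) * W + r • (Sᴴ * (K - V * diagonal d * Vᵀ) * S) := by
    simp only [W, conjTranspose_eq_transpose_of_trivial, transpose_mul, transpose_transpose,
      Matrix.mul_sub, Matrix.sub_mul, smul_sub, Matrix.mul_smul, Matrix.smul_mul, Matrix.mul_assoc]
    abel
  exact calc
    ∏ i, (1 + r * d i / c) = (1 + c⁻¹ • (r • diagonal d)).det := by
        rw [smul_smul, ← diagonal_smul, ← diagonal_one, diagonal_add, det_diagonal]
        simp [div_eq_inv_mul, mul_assoc]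
    _ ≤ (1 + Wᵀ * (r • diagonal d) * W).det :=
        det_one_add_smul_le_det_one_add_transpose_mul_mul hΛ (inv_nonneg.mpr hc.le)
          (posSemidef_mul_transpose_sub_smul_one hinv hc hnorm)
    _ ≤ (1 + r • (Sᵀ * K * S)).det := by
        rw [hsplit]
        refine (PosDef.one.add_posSemidef ?_).det_le_det_add
          ((hN.conjTranspose_mul_mul_same S).smul hr)
        simpa only [conjTranspose_eq_transpose_of_trivial] using hΛ.conjTranspose_mul_mul_same W

theorem stmt_3_general {n k : ℕ} (hkn : k < n)
    {K : Matrix (Fin n) (Fin n) ℝ} (hK : K.PosSemidef)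
    {η : ℝ} {f : ℝ}
    (Vk : Matrix (Fin n) (Fin k) ℝ)
    (hVk_orth : Vkᵀ * Vk = 1)
    (hVk_eig : K * Vk =
      Vk * Matrix.diagonal (fun j : Fin k =>
        eigsDesc hK.isHermitian (Fin.castLE hkn.le j)))
    (S : Matrix (Fin n) (Fin k) ℝ)
    (hinv : IsUnit (Vkᵀ * S).det)
    (hnorm : specNorm ((Vkᵀ * S)⁻¹) ^ 2 ≤ 1 + f ^ 2 * k * (n - k : ℝ)) :
    ∑ i : Fin k, Real.log (1 + η⁻¹ ^ 2 * eigsDesc hK.isHermitian (Fin.castLE hkn.le i)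
        / (1 + f ^ 2 * k * (n - k : ℝ)))
      ≤ Real.log ((1 + η⁻¹ ^ 2 • (Sᵀ * K * S)).det) := by
  set μ : Fin k → ℝ := fun j => eigsDesc hK.isHermitian (Fin.castLE hkn.le j)
  set c : ℝ := 1 + f ^ 2 * k * (n - k : ℝ)
  have hμ : 0 ≤ μ := fun j => eigsDesc_nonneg hK _
  have hc : 0 < c := by
    have : (0 : ℝ) < n - k := sub_pos.mpr (by exact_mod_cast hkn)
    positivity
  have hterm : ∀ i, 0 < 1 + η⁻¹ ^ 2 * μ i / c := fun i => by
    have : 0 ≤ μ i := hμ i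
    positivity
  rw [← Real.log_prod fun i _ => (hterm i).ne']
  exact Real.log_le_log (Finset.prod_pos fun i _ => hterm i)
    (prod_one_add_div_le_det_one_add_smul hK hμ hVk_orth hVk_eig hinv (by positivity) hc hnorm)

/-- Corollary 3.2: D-optimality guarantee of GKS with
strong rank-revealing QR, `‖(VₖᵀS)⁻¹‖₂² ≤ 1 + f²k(n−k)` yields
`logdet(I + η⁻²SᵀKS) ≥ ∑ log(1 + η⁻²λᵢ(K)/(1 + f²k(n−k)))`. -/
theorem stmt_3 {n k : ℕ} (hk : 1 ≤ k) (hkn : k < n)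
    {K : Matrix (Fin n) (Fin n) ℝ} (hK : K.PosSemidef)
    {η : ℝ} (hη : 0 < η) {f : ℝ} (hf : 1 ≤ f)
    (Vk : Matrix (Fin n) (Fin k) ℝ)
    (hVk_orth : Vkᵀ * Vk = 1)
    (hVk_eig : K * Vk =
      Vk * Matrix.diagonal (fun j : Fin k =>
        eigsDesc hK.isHermitian (Fin.castLE hkn.le j)))
    (S : Matrix (Fin n) (Fin k) ℝ) (hS : IsSelection S)
    (hinv : IsUnit (Vkᵀ * S).det)
    (hnorm : specNorm ((Vkᵀ * S)⁻¹) ^ 2 ≤ 1 + f ^ 2 * k * (n - k : ℝ)) :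
    ∑ i : Fin k, Real.log (1 + η⁻¹ ^ 2 * eigsDesc hK.isHermitian (Fin.castLE hkn.le i)
        / (1 + f ^ 2 * k * (n - k : ℝ)))
      ≤ Real.log ((1 + η⁻¹ ^ 2 • (Sᵀ * K * S)).det) :=
  stmt_3_general hkn hK Vk hVk_orth hVk_eig S hinv hnorm
end

section
/- Let K and K̂ be n×n real symmetric matrices with 0 ⪯ K̂ ⪯ K, let η > 0 and 1 ≤ k ≤ n. Let Û_k ∈ ℝ^{n×k} have as columns orthonormal eigenvectors of K̂ associated with its k largest eigenvalues λ_1(K̂), …, λ_k(K̂). If S ∈ ℝ^{n×k} is a selection operator such that Û_k^T S is invertible, then logdet(I_k + η^{-2} S^T K S) ≥ Σ_{i=1}^k log(1 + η^{-2} λ_i(K̂) / ‖(Û_k^T S)^{-1}‖_2^2). -/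
/-!
Write `M = ÛₖᵀS` and `Λ = diag(λ₁(K̂), …, λₖ(K̂))`. Since `K̂Ûₖ = ÛₖΛ` with orthonormal columns,
`K̂ - ÛₖΛÛₖᵀ` is the compression of `K̂` to the complement of the range of `Ûₖ`, so
`ÛₖΛÛₖᵀ ⪯ K̂ ⪯ K` and hence `MᵀΛM ⪯ SᵀKS`. By the Weinstein–Aronszajn identity
`det(I + η⁻²MᵀΛM) = det(I + η⁻²Λ^{1/2}MMᵀΛ^{1/2})`, and `MMᵀ ⪰ ‖M⁻¹‖₂⁻² I`. As the determinant is
monotone on positive definite matrices in the Loewner order,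
`det(I + η⁻²‖M⁻¹‖₂⁻²Λ) ≤ det(I + η⁻²MᵀΛM) ≤ det(I + η⁻²SᵀKS)`, and the left side is the
product of the `1 + η⁻²λᵢ(K̂)/‖M⁻¹‖₂²`.
-/

open Matrix BigOperators

open scoped MatrixOrder Matrix.Norms.L2Operator

namespace Matrix

section Determinant

variable {n : Type*} [Fintype n] [DecidableEq n]

theorem one_le_det_one_add {Q : Matrix n n ℝ} (hQ : 0 ≤ Q) : 1 ≤ (1 + Q).det := by
  have hH : (1 + Q).IsHermitian := (PosSemidef.one.add (nonneg_iff_posSemidef.mp hQ)).isHermitian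
  have hspec : ∀ x ∈ spectrum ℝ (1 + Q), 1 ≤ x := by
    refine (algebraMap_le_iff_le_spectrum (R := ℝ) (p := IsSelfAdjoint) hH).mp ?_
    rw [map_one]
    exact le_add_of_nonneg_right hQ
  rw [hH.det_eq_prod_eigenvalues]
  exact Finset.one_le_prod fun i _ => hspec _ (hH.eigenvalues_mem_spectrum_real i)

theorem det_le_det_of_le {A B : Matrix n n ℝ} (hA : A.PosDef) (hAB : A ≤ B) : A.det ≤ B.det := by
  set T := CFC.sqrt A⁻¹
  have hT : IsSelfAdjoint T := .of_nonneg (CFC.sqrt_nonneg _)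
  have hTT : T * T = A⁻¹ := CFC.sqrt_mul_sqrt_self _ hA.inv.posSemidef.nonneg
  have hB : B = A * (1 + T * (T * (B - A))) := by
    rw [Matrix.mul_add, ← Matrix.mul_assoc T, hTT, ← Matrix.mul_assoc,
      mul_nonsing_inv _ ((isUnit_iff_isUnit_det A).mp hA.isUnit)]
    simp
  have hconj : 0 ≤ T * (B - A) * T := by
    simpa [hT.star_eq] using star_left_conjugate_le_conjugate (sub_nonneg.mpr hAB) T
  calc A.det = A.det * 1 := (mul_one _).symm
    _ ≤ A.det * (1 + T * (B - A) * T).det :=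
      mul_le_mul_of_nonneg_left (one_le_det_one_add hconj) hA.det_pos.le
    _ = (A * (1 + T * (T * (B - A)))).det := by rw [det_mul, det_one_add_mul_comm]
    _ = B.det := by rw [← hB]

theorem det_one_add_le_det_one_add {X Y : Matrix n n ℝ} (hX : 0 ≤ X) (hXY : X ≤ Y) :
    (1 + X).det ≤ (1 + Y).det :=
  det_le_det_of_le (PosDef.one.add_posSemidef (nonneg_iff_posSemidef.mp hX))
    (add_le_add_right hXY 1)

theorem det_one_add_pos {X : Matrix n n ℝ} (hX : 0 ≤ X) : 0 < (1 + X).det :=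
  one_pos.trans_le (one_le_det_one_add hX)

/-- Conjugating by `√D` reduces this to `a • D ≤ √D * G * √D`. -/
theorem det_one_add_smul_le_det_one_add_mul {D G : Matrix n n ℝ} {a : ℝ} (hD : 0 ≤ D)
    (ha : 0 ≤ a) (hG : a • 1 ≤ G) : (1 + a • D).det ≤ (1 + G * D).det := by
  set R := CFC.sqrt D
  have hR : IsSelfAdjoint R := .of_nonneg (CFC.sqrt_nonneg _)
  have hRR : R * R = D := CFC.sqrt_mul_sqrt_self D hD
  have haD : a • D = R * (a • 1) * R := by
    rw [mul_smul_comm, Matrix.mul_one, smul_mul_assoc, hRR]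
  calc (1 + a • D).det ≤ (1 + R * G * R).det := by
        refine det_one_add_le_det_one_add (smul_nonneg ha hD) ?_
        simpa [haD, hR.star_eq] using star_left_conjugate_le_conjugate hG R
    _ = (1 + G * D).det := by rw [Matrix.mul_assoc, det_one_add_mul_comm, Matrix.mul_assoc, hRR]

theorem log_det_one_add_diagonal {d : n → ℝ} (hd : 0 ≤ d) :
    Real.log (1 + diagonal d).det = ∑ i, Real.log (1 + d i) := by
  rw [← diagonal_one, diagonal_add, det_diagonal, Real.log_prod]
  exact fun i _ => (add_pos_of_pos_of_nonneg one_pos (hd i)).ne'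

end Determinant

section Loewner

variable {n k : Type*} [Fintype n] [Fintype k]

theorem transpose_mul_mul_le_transpose_mul_mul {A B : Matrix n n ℝ} (h : A ≤ B)
    (S : Matrix n k ℝ) : Sᵀ * A * S ≤ Sᵀ * B * S := by
  rw [le_iff] at h ⊢
  simpa [Matrix.mul_sub, Matrix.sub_mul] using h.conjTranspose_mul_mul_same S

variable [DecidableEq n] [DecidableEq k]

/-- `K - U diag(d) Uᵀ` is `K` compressed to the orthogonal complement of the range of `U`. -/
theorem mul_diagonal_mul_transpose_le {K : Matrix n n ℝ} (hK : K.PosSemidef)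
    {U : Matrix n k ℝ} {d : k → ℝ} (hU : Uᵀ * U = 1) (hKU : K * U = U * diagonal d) :
    U * diagonal d * Uᵀ ≤ K := by
  have hKt : Kᵀ = K := by rw [← conjTranspose_eq_transpose_of_trivial, hK.isHermitian.eq]
  have hKP : K * (U * Uᵀ) = U * diagonal d * Uᵀ := by rw [← Matrix.mul_assoc, hKU]
  have hPK : U * Uᵀ * K = U * diagonal d * Uᵀ := by
    simpa [Matrix.mul_assoc, hKt] using congrArg transpose hKP
  have hPKP : U * diagonal d * Uᵀ * (U * Uᵀ) = U * diagonal d * Uᵀ := by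
    rw [Matrix.mul_assoc _ Uᵀ, ← Matrix.mul_assoc Uᵀ, hU, Matrix.one_mul]
  have hcompress : (1 - U * Uᵀ)ᵀ * K * (1 - U * Uᵀ) = K - U * diagonal d * Uᵀ := by
    simp only [transpose_sub, transpose_one, transpose_mul, transpose_transpose, Matrix.sub_mul,
      Matrix.mul_sub, Matrix.one_mul, Matrix.mul_one, hKP, hPK, hPKP]
    abel
  rw [le_iff, ← hcompress, ← conjTranspose_eq_transpose_of_trivial]
  exact hK.conjTranspose_mul_mul_same _

end Loewner

theorem dotProduct_self_eq_norm_sq {m : Type*} [Fintype m] (x : m → ℝ) :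
    x ⬝ᵥ x = ‖(EuclideanSpace.equiv m ℝ).symm x‖ ^ 2 := by
  rw [← real_inner_self_eq_norm_sq, EuclideanSpace.inner_eq_star_dotProduct]
  simp

/-- The norm is the L2 operator norm; `‖x‖ ≤ ‖M⁻¹‖ ‖Mᵀ x‖` since `x = (M⁻¹)ᵀ Mᵀ x`. -/
theorem inv_norm_inv_sq_smul_one_le_mul_transpose {m : Type*} [Fintype m] [DecidableEq m]
    {M : Matrix m m ℝ} (hM : IsUnit M.det) : ‖M⁻¹‖⁻¹ ^ 2 • (1 : Matrix m m ℝ) ≤ M * Mᵀ := by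
  have hH : (M * Mᵀ).IsHermitian := by simpa using isHermitian_mul_conjTranspose_self M
  refine .of_dotProduct_mulVec_nonneg (hH.sub (isHermitian_one.smul (.all _))) fun x => ?_
  have hx : (M⁻¹)ᵀ *ᵥ (Mᵀ *ᵥ x) = x := by
    rw [mulVec_mulVec, ← transpose_mul, mul_nonsing_inv M hM, transpose_one, one_mulVec]
  have hnorm : ‖M⁻¹‖⁻¹ * ‖(EuclideanSpace.equiv m ℝ).symm x‖
      ≤ ‖(EuclideanSpace.equiv m ℝ).symm (Mᵀ *ᵥ x)‖ := by
    refine inv_mul_le_of_le_mul₀ (norm_nonneg _) (norm_nonneg _) ?_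
    have := l2_opNorm_mulVec (M⁻¹)ᵀ ((EuclideanSpace.equiv m ℝ).symm (Mᵀ *ᵥ x))
    rw [← conjTranspose_eq_transpose_of_trivial, l2_opNorm_conjTranspose] at this
    simpa [hx] using this
  have hquad : star x ⬝ᵥ (M * Mᵀ - ‖M⁻¹‖⁻¹ ^ 2 • 1) *ᵥ x
      = (Mᵀ *ᵥ x) ⬝ᵥ (Mᵀ *ᵥ x) - ‖M⁻¹‖⁻¹ ^ 2 * (x ⬝ᵥ x) := by
    rw [star_trivial, sub_mulVec, dotProduct_sub, ← mulVec_mulVec, dotProduct_mulVec,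
      ← mulVec_transpose, smul_mulVec, one_mulVec, dotProduct_smul, smul_eq_mul]
  rw [hquad, dotProduct_self_eq_norm_sq, dotProduct_self_eq_norm_sq, sub_nonneg, ← mul_pow]
  exact pow_le_pow_left₀ (by positivity) hnorm 2

end Matrix

open Matrix

theorem stmt_8_general {n k : ℕ} (hkn : k ≤ n)
    {K Khat : Matrix (Fin n) (Fin n) ℝ}
    (hKhat : Khat.PosSemidef) (hle : (K - Khat).PosSemidef)
    {η : ℝ}
    (Uk : Matrix (Fin n) (Fin k) ℝ)
    (hUk_orth : Ukᵀ * Uk = 1)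
    (hUk_eig : Khat * Uk =
      Uk * Matrix.diagonal (fun j : Fin k =>
        eigsDesc hKhat.isHermitian (Fin.castLE hkn j)))
    (S : Matrix (Fin n) (Fin k) ℝ)
    (hinv : IsUnit (Ukᵀ * S).det) :
    ∑ i : Fin k, Real.log (1 + η⁻¹ ^ 2 * eigsDesc hKhat.isHermitian (Fin.castLE hkn i)
        / specNorm ((Ukᵀ * S)⁻¹) ^ 2)
      ≤ Real.log ((1 + η⁻¹ ^ 2 • (Sᵀ * K * S)).det) := by
  set lam := fun j : Fin k => eigsDesc hKhat.isHermitian (Fin.castLE hkn j)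
  set M := Ukᵀ * S
  have hlam : 0 ≤ lam := fun j => hKhat.eigenvalues_nonneg _
  have hc : (0 : ℝ) ≤ η⁻¹ ^ 2 := by positivity
  set D := η⁻¹ ^ 2 • diagonal lam
  have hD : 0 ≤ D := smul_nonneg hc (PosSemidef.diagonal hlam).nonneg
  have hMDM0 : 0 ≤ Mᵀ * D * M := by simpa using transpose_mul_mul_le_transpose_mul_mul hD M
  have hMDM : Mᵀ * D * M ≤ η⁻¹ ^ 2 • (Sᵀ * K * S) := by
    have hUK : Uk * diagonal lam * Ukᵀ ≤ K :=
      (mul_diagonal_mul_transpose_le hKhat hUk_orth hUk_eig).trans hle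
    convert transpose_mul_mul_le_transpose_mul_mul (smul_le_smul_of_nonneg_left hUK hc) S using 1
    · simp only [D, M, transpose_mul, transpose_transpose, Matrix.mul_smul, Matrix.smul_mul,
        Matrix.mul_assoc]
    · simp only [Matrix.mul_smul, Matrix.smul_mul]
  calc _ = Real.log (1 + (specNorm M⁻¹)⁻¹ ^ 2 • D).det := by
        rw [smul_smul, ← diagonal_smul, log_det_one_add_diagonal (smul_nonneg (by positivity) hlam)]
        refine Finset.sum_congr rfl fun i _ => ?_
        simp only [Pi.smul_apply, smul_eq_mul, lam]
        ring_nf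
    _ ≤ Real.log (1 + M * Mᵀ * D).det :=
        Real.log_le_log (det_one_add_pos (smul_nonneg (by positivity) hD))
          (det_one_add_smul_le_det_one_add_mul hD (by positivity)
            (inv_norm_inv_sq_smul_one_le_mul_transpose hinv))
    _ = Real.log (1 + Mᵀ * D * M).det := by
        rw [Matrix.mul_assoc, det_one_add_mul_comm, Matrix.mul_assoc]
    _ ≤ _ := Real.log_le_log (det_one_add_pos hMDM0) (det_one_add_le_det_one_add hMDM0 hMDM)

/-- Key inequality in the proof of Theorem 3.4: if
`0 ⪯ K̂ ⪯ K` and `Ûₖ` holds orthonormal eigenvectors of `K̂` for its `k`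
largest eigenvalues, then for any selection operator `S` with `ÛₖᵀS`
invertible, `logdet(I + η⁻²SᵀKS) ≥ ∑ log(1 + η⁻²λᵢ(K̂)/‖(ÛₖᵀS)⁻¹‖₂²)`. -/
theorem stmt_8 {n k : ℕ} (hk : 1 ≤ k) (hkn : k ≤ n)
    {K Khat : Matrix (Fin n) (Fin n) ℝ}
    (hKsymm : K.IsHermitian)
    (hKhat : Khat.PosSemidef) (hle : (K - Khat).PosSemidef)
    {η : ℝ} (hη : 0 < η)
    (Uk : Matrix (Fin n) (Fin k) ℝ)
    (hUk_orth : Ukᵀ * Uk = 1)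
    (hUk_eig : Khat * Uk =
      Uk * Matrix.diagonal (fun j : Fin k =>
        eigsDesc hKhat.isHermitian (Fin.castLE hkn j)))
    (S : Matrix (Fin n) (Fin k) ℝ) (hS : IsSelection S)
    (hinv : IsUnit (Ukᵀ * S).det) :
    ∑ i : Fin k, Real.log (1 + η⁻¹ ^ 2 * eigsDesc hKhat.isHermitian (Fin.castLE hkn i)
        / specNorm ((Ukᵀ * S)⁻¹) ^ 2)
      ≤ Real.log ((1 + η⁻¹ ^ 2 • (Sᵀ * K * S)).det) :=
  stmt_8_general hkn hKhat hle Uk hUk_orth hUk_eig S hinv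
end
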